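/- arXiv:1911.01043 — 3 statements merged into one kernel-verified Lean document; each statement's English description precedes it below -/
import Mathlib

section
/- Let w̄ ∈ ℝʳ, V̄ ∈ ℝ^{r×n}, b̄ ∈ ℝʳ, let {x_s}_{s∈S} be a finite set of points in ℝⁿ with labels σ_s ∈ {+1, −1} and nonnegative scalars {μ_s}_{s∈S}. For each s ∈ S let G_s be the diagonal r×r matrix with (G_s)_{kk} = 1 if V̄_k x_s + b̄_k > 0 and 0 otherwise, where V̄_k and b̄_k are the k-th row of V̄ and entry of b̄. Assume: (a) w̄ = Σ_s σ_s μ_s G_s (V̄ x_s + b̄), (b) V̄ = Σ_s σ_s μ_s G_s w̄ x_sᵀ, (c) b̄ = Σ_s σ_s μ_s G_s w̄, and (d) σ_s · w̄ᵀ (V̄ x_s + b̄)_+ = 1 for every s ∈ S. For k ∈ [r] let S_k = { s ∈ S : V̄_k x_s + b̄_k > 0 }, let X_k be the matrix whose columns are {σ_s x_s}_{s∈S_k}, let n_sup = max_{k} |S_k|, let λ̲ = min over k with S_k ≠ ∅ of λ_min(X_kᵀ X_k), assumed strictly positive, and let n_node be the minimum cardinality of a set K ⊆ [r] such that every s ∈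 S belongs to S_k for some k ∈ K. Then the map x ↦ w̄ᵀ (V̄ x + b̄)_+ is Lipschitz with respect to the Euclidean norm with constant at most n_node · √(n_sup) / √(λ̲). -/
/-!
Pairing (b) and (c) with the row `(V̄_k, b̄_k)` and using (a) gives the balancedness
`‖V̄_k‖² + b̄_k² = w̄_k²`, while pairing (a) with `w̄` and using (d) gives `∑_k w̄_k² = ∑_s μ_s`.
Hence the network is Lipschitz with constant `∑_k |w̄_k| ‖V̄_k‖ ≤ ∑_k w̄_k² = ∑_s μ_s`.
By (b), `V̄_k = w̄_k X_k μ_{S_k}`, so `w̄_k² λ̲ ‖μ_{S_k}‖² ≤ ‖V̄_k‖² ≤ w̄_k²`, and `w̄_k ≠ 0` once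
node `k` is active; Cauchy–Schwarz turns this into `∑_{s ∈ S_k} μ_s ≤ √n_sup / √λ̲`. By (d) every
point activates some node, so a cover of the points by `n_node` active sets exists, and summing
over it bounds `∑_s μ_s` by `n_node √n_sup / √λ̲`.
-/

open Matrix

noncomputable def en {n : ℕ} (v : Fin n → ℝ) : ℝ := Real.sqrt (∑ i, (v i) ^ 2)

/-- Smallest eigenvalue of a symmetric real matrix (junk value `0` if not symmetric). -/
noncomputable def lamMin {ι : Type*} [Fintype ι] [DecidableEq ι] (S : Matrix ι ι ℝ) : ℝ :=
  if h : S.IsHermitian then ⨅ i, h.eigenvalues i else 0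

open Finset

namespace Matrix.IsHermitian

variable {m : Type*} [Fintype m] [DecidableEq m] {A : Matrix m m ℝ}

lemma posSemidef_sub_algebraMap (hA : A.IsHermitian) {c : ℝ} (hc : ∀ i, c ≤ hA.eigenvalues i) :
    (A - algebraMap ℝ _ c).PosSemidef := by
  have hH : (A - algebraMap ℝ _ c).IsHermitian :=
    hA.sub (by rw [algebraMap_eq_diagonal]; exact isHermitian_diagonal _)
  refine posSemidef_iff_isHermitian_and_spectrum_nonneg.mpr ⟨hH, ?_⟩
  rw [← spectrum.sub_singleton_eq, hA.spectrum_real_eq_range_eigenvalues]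
  rintro _ ⟨_, ⟨i, rfl⟩, _, rfl, rfl⟩
  simpa using hc i

lemma lamMin_le_eigenvalues (hA : A.IsHermitian) (i : m) : lamMin A ≤ hA.eigenvalues i := by
  rw [lamMin, dif_pos hA]
  exact ciInf_le (Finite.bddBelow_range _) i

lemma lamMin_mul_dotProduct_self_le (hA : A.IsHermitian) (v : m → ℝ) :
    lamMin A * (v ⬝ᵥ v) ≤ v ⬝ᵥ (A *ᵥ v) := by
  have h := (hA.posSemidef_sub_algebraMap hA.lamMin_le_eigenvalues).dotProduct_mulVec_nonneg v
  rw [Algebra.algebraMap_eq_smul_one, sub_mulVec, smul_mulVec, one_mulVec, star_trivial,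
    dotProduct_sub, dotProduct_smul, smul_eq_mul] at h
  linarith

end Matrix.IsHermitian

lemma lamMin_mul_transpose_mul_dotProduct_self_le {m p : Type*} [Fintype m] [DecidableEq m]
    [Fintype p] (Y : Matrix m p ℝ) (v : m → ℝ) :
    lamMin (Y * Yᵀ) * (v ⬝ᵥ v) ≤ (v ᵥ* Y) ⬝ᵥ (v ᵥ* Y) := by
  have h := (isHermitian_mul_conjTranspose_self Y).lamMin_mul_dotProduct_self_le v
  rwa [conjTranspose_eq_transpose_of_trivial, ← mulVec_mulVec, dotProduct_mulVec,
    mulVec_transpose] at h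

lemma en_nonneg {n : ℕ} (v : Fin n → ℝ) : 0 ≤ en v := Real.sqrt_nonneg _

lemma en_eq_sqrt_dotProduct_self {n : ℕ} (v : Fin n → ℝ) : en v = √(v ⬝ᵥ v) := by
  simp only [en, dotProduct, sq]

lemma abs_dotProduct_le_en_mul_en {n : ℕ} (u v : Fin n → ℝ) : |u ⬝ᵥ v| ≤ en u * en v := by
  rw [en, en, ← Real.sqrt_mul (sum_nonneg fun i _ => sq_nonneg (u i))]
  exact Real.abs_le_sqrt (sum_mul_sq_le_sq_mul_sq _ _ _)

lemma sum_le_sqrt_div_sqrt_of_mul_sum_sq_le_one {ι : Type*} {s : Finset ι} {f : ι → ℝ} {N : ℕ}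
    {c : ℝ} (hc : 0 < c) (hs : #s ≤ N) (h : c * ∑ i ∈ s, f i ^ 2 ≤ 1) :
    ∑ i ∈ s, f i ≤ √N / √c := by
  rw [← Real.sqrt_div (Nat.cast_nonneg N)]
  refine Real.le_sqrt_of_sq_le ?_
  calc (∑ i ∈ s, f i) ^ 2 ≤ #s * ∑ i ∈ s, f i ^ 2 := sq_sum_le_card_mul_sum_sq
    _ ≤ N * (1 / c) := by
        gcongr
        rw [le_div_iff₀ hc]
        linarith
    _ = N / c := by ring

lemma sum_le_card_mul_of_forall_exists_mem {ι κ : Type*} [Fintype ι] {f : ι → ℝ}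
    (hf : ∀ i, 0 ≤ f i) {K : Finset κ} {S : κ → Finset ι} (hK : ∀ i, ∃ k ∈ K, i ∈ S k) {B : ℝ}
    (hB : ∀ k ∈ K, ∑ i ∈ S k, f i ≤ B) : ∑ i, f i ≤ #K * B := by
  classical
  calc ∑ i, f i ≤ ∑ i, ∑ k ∈ K, if i ∈ S k then f i else 0 := by
        refine sum_le_sum fun i _ => ?_
        obtain ⟨k, hk, hi⟩ := hK i
        calc f i = if i ∈ S k then f i else 0 := (if_pos hi).symm
          _ ≤ _ := single_le_sum (f := fun k => if i ∈ S k then f i else 0)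
              (fun k _ => by split_ifs <;> simp [hf]) hk
    _ = ∑ k ∈ K, ∑ i ∈ S k, f i := by
        rw [sum_comm]
        simp only [sum_ite_mem, univ_inter]
    _ ≤ #K * B := by simpa using sum_le_card_nsmul K _ B hB

lemma exists_card_eq_sInf_of_forall_exists_mem {ι κ : Type*} [Fintype κ] {S : κ → Finset ι}
    (h : ∀ i, ∃ k, i ∈ S k) :
    ∃ K : Finset κ, #K = sInf {c : ℕ | ∃ K : Finset κ, #K = c ∧ ∀ i, ∃ k ∈ K, i ∈ S k} ∧
      ∀ i, ∃ k ∈ K, i ∈ S k :=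
  Nat.sInf_mem (s := {c : ℕ | ∃ K : Finset κ, #K = c ∧ ∀ i, ∃ k ∈ K, i ∈ S k})
    ⟨_, univ, rfl, fun i => (h i).imp fun k hk => ⟨mem_univ k, hk⟩⟩

noncomputable def twoLayerNet {r n : ℕ} (w : Fin r → ℝ) (V : Matrix (Fin r) (Fin n) ℝ)
    (b : Fin r → ℝ) (z : Fin n → ℝ) : ℝ :=
  ∑ k, w k * max (V k ⬝ᵥ z + b k) 0

section TwoLayerNet

variable {r n : ℕ} (w : Fin r → ℝ) (V : Matrix (Fin r) (Fin n) ℝ) (b : Fin r → ℝ)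

lemma abs_twoLayerNet_sub_le (z y : Fin n → ℝ) :
    |twoLayerNet w V b z - twoLayerNet w V b y| ≤ (∑ k, |w k| * en (V k)) * en (z - y) := by
  rw [twoLayerNet, twoLayerNet, ← sum_sub_distrib, sum_mul]
  refine (abs_sum_le_sum_abs _ _).trans (sum_le_sum fun k _ => ?_)
  rw [← mul_sub, abs_mul, mul_assoc]
  gcongr
  calc |max (V k ⬝ᵥ z + b k) 0 - max (V k ⬝ᵥ y + b k) 0|
      ≤ |V k ⬝ᵥ z + b k - (V k ⬝ᵥ y + b k)| := abs_max_sub_max_le_abs _ _ _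
    _ = |V k ⬝ᵥ (z - y)| := by rw [dotProduct_sub, add_sub_add_right_eq_sub]
    _ ≤ en (V k) * en (z - y) := abs_dotProduct_le_en_mul_en _ _

variable {w V b} in
lemma exists_pos_of_twoLayerNet_ne_zero {z : Fin n → ℝ} (h : twoLayerNet w V b z ≠ 0) :
    ∃ k, 0 < V k ⬝ᵥ z + b k := by
  contrapose! h
  exact sum_eq_zero fun k _ => by rw [max_eq_right (h k), mul_zero]

end TwoLayerNet

noncomputable def activeSet {ι : Type*} [Fintype ι] {r n : ℕ} (V : Matrix (Fin r) (Fin n) ℝ)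
    (b : Fin r → ℝ) (x : ι → Fin n → ℝ) (k : Fin r) : Finset ι :=
  Finset.univ.filter (fun s => 0 < V k ⬝ᵥ x s + b k)

@[simp]
lemma mem_activeSet {ι : Type*} [Fintype ι] {r n : ℕ} {V : Matrix (Fin r) (Fin n) ℝ}
    {b : Fin r → ℝ} {x : ι → Fin n → ℝ} {k : Fin r} {s : ι} :
    s ∈ activeSet V b x k ↔ 0 < V k ⬝ᵥ x s + b k := by
  simp [activeSet]

noncomputable def activeGram {ι : Type*} [Fintype ι] {r n : ℕ} (V : Matrix (Fin r) (Fin n) ℝ)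
    (b : Fin r → ℝ) (x : ι → Fin n → ℝ) (σ : ι → ℝ) (k : Fin r) :
    Matrix {i // i ∈ activeSet V b x k} {i // i ∈ activeSet V b x k} ℝ :=
  of fun s t => ∑ a, (σ s.1 * x s.1 a) * (σ t.1 * x t.1 a)

structure IsStationaryRepr {ι : Type*} [Fintype ι] {r n : ℕ} (w : Fin r → ℝ)
    (V : Matrix (Fin r) (Fin n) ℝ) (b : Fin r → ℝ) (x : ι → Fin n → ℝ) (σ μ : ι → ℝ) : Prop where
  weight : ∀ k, w k =
    ∑ s, σ s * μ s * (if 0 < V k ⬝ᵥ x s + b k then V k ⬝ᵥ x s + b k else 0)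
  row : ∀ k a, V k a = ∑ s, σ s * μ s * (if 0 < V k ⬝ᵥ x s + b k then w k else 0) * x s a
  bias : ∀ k, b k = ∑ s, σ s * μ s * (if 0 < V k ⬝ᵥ x s + b k then w k else 0)

namespace IsStationaryRepr

variable {ι : Type*} [Fintype ι] {r n : ℕ} {w : Fin r → ℝ} {V : Matrix (Fin r) (Fin n) ℝ}
  {b : Fin r → ℝ} {x : ι → Fin n → ℝ} {σ μ : ι → ℝ}

lemma weight_ne_zero_of_pos (h : IsStationaryRepr w V b x σ μ)
    {k : Fin r} {z : Fin n → ℝ} (hz : 0 < V k ⬝ᵥ z + b k) : w k ≠ 0 := by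
  intro hw
  have hVk : V k = 0 := funext fun a => by rw [h.row k a]; simp [hw]
  have hbk : b k = 0 := by rw [h.bias k]; simp [hw]
  simp [hVk, hbk] at hz

lemma dotProduct_self_add_sq_eq_sq (h : IsStationaryRepr w V b x σ μ)
    (k : Fin r) : V k ⬝ᵥ V k + b k ^ 2 = w k ^ 2 := by
  set c : ι → ℝ := fun s => σ s * μ s * (if 0 < V k ⬝ᵥ x s + b k then w k else 0)
  have hVk : V k = ∑ s, c s • x s := funext fun a => by
    simp only [h.row k a, Finset.sum_apply, Pi.smul_apply, smul_eq_mul, c]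
  calc V k ⬝ᵥ V k + b k ^ 2 = ∑ s, c s * (V k ⬝ᵥ x s + b k) := by
        nth_rewrite 2 [hVk]
        rw [sq]
        nth_rewrite 2 [h.bias k]
        simp only [dotProduct_sum, dotProduct_smul, smul_eq_mul, mul_sum, ← sum_add_distrib]
        exact sum_congr rfl fun s _ => by ring
    _ = w k * ∑ s, σ s * μ s * (if 0 < V k ⬝ᵥ x s + b k then V k ⬝ᵥ x s + b k else 0) := by
        rw [mul_sum]
        refine sum_congr rfl fun s _ => ?_
        simp only [c]
        split_ifs <;> ring
    _ = w k ^ 2 := by rw [← h.weight k, sq]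

lemma en_row_le_abs_weight (h : IsStationaryRepr w V b x σ μ)
    (k : Fin r) : en (V k) ≤ |w k| := by
  rw [en_eq_sqrt_dotProduct_self, ← Real.sqrt_sq_eq_abs]
  exact Real.sqrt_le_sqrt (by linarith [h.dotProduct_self_add_sq_eq_sq k, sq_nonneg (b k)])

lemma sum_sq_weight_eq_sum (h : IsStationaryRepr w V b x σ μ)
    (hd : ∀ s, σ s * twoLayerNet w V b (x s) = 1) :
    ∑ k, w k ^ 2 = ∑ s, μ s := by
  calc ∑ k, w k ^ 2
      = ∑ k, w k * ∑ s, σ s * μ s * (if 0 < V k ⬝ᵥ x s + b k then V k ⬝ᵥ x s + b k else 0) :=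
        sum_congr rfl fun k _ => by rw [← h.weight k, sq]
    _ = ∑ s, μ s * (σ s * twoLayerNet w V b (x s)) := by
        simp only [twoLayerNet, mul_sum]
        rw [sum_comm]
        refine sum_congr rfl fun s _ => sum_congr rfl fun k _ => ?_
        split_ifs with hk
        · rw [max_eq_left hk.le]; ring
        · rw [max_eq_right (not_lt.1 hk)]; ring
    _ = ∑ s, μ s := by simp only [hd, mul_one]

lemma lamMin_activeGram_mul_sum_sq_le_one [DecidableEq ι] (h : IsStationaryRepr w V b x σ μ)
    {k : Fin r} (hk : (activeSet V b x k).Nonempty) :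
    lamMin (activeGram V b x σ k) * ∑ s ∈ activeSet V b x k, μ s ^ 2 ≤ 1 := by
  let Y : Matrix {i // i ∈ activeSet V b x k} (Fin n) ℝ := of fun s a => σ s.1 * x s.1 a
  let ν : {i // i ∈ activeSet V b x k} → ℝ := fun s => μ s.1
  have hrow : V k = w k • (ν ᵥ* Y) := funext fun a => by
    simp only [Pi.smul_apply, smul_eq_mul, vecMul, dotProduct, ν, Y, of_apply]
    rw [h.row k a, sum_coe_sort (activeSet V b x k) (fun s => μ s * (σ s * x s a)), activeSet,
      sum_filter, mul_sum]
    exact sum_congr rfl fun s _ => by split_ifs <;> ring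
  have hνν : ν ⬝ᵥ ν = ∑ s ∈ activeSet V b x k, μ s ^ 2 := by
    simp only [dotProduct, ν, ← sq]
    exact sum_coe_sort _ fun s => μ s ^ 2
  obtain ⟨s, hs⟩ := hk
  have hw : 0 < w k ^ 2 :=
    sq_pos_of_ne_zero (h.weight_ne_zero_of_pos (mem_activeSet.1 hs))
  refine le_of_mul_le_mul_left ?_ hw
  calc w k ^ 2 * (lamMin (Y * Yᵀ) * ∑ s ∈ activeSet V b x k, μ s ^ 2)
      ≤ w k ^ 2 * ((ν ᵥ* Y) ⬝ᵥ (ν ᵥ* Y)) := by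
        rw [← hνν]
        gcongr
        exact lamMin_mul_transpose_mul_dotProduct_self_le Y ν
    _ = V k ⬝ᵥ V k := by
        rw [hrow, smul_dotProduct, dotProduct_smul, smul_eq_mul, smul_eq_mul]
        ring
    _ ≤ w k ^ 2 * 1 := by linarith [h.dotProduct_self_add_sq_eq_sq k, sq_nonneg (b k)]

lemma sum_activeSet_le [DecidableEq ι] (h : IsStationaryRepr w V b x σ μ)
    {N : ℕ} {c : ℝ} (hc : 0 < c) (hN : ∀ k, #(activeSet V b x k) ≤ N)
    (hcl : ∀ k, (activeSet V b x k).Nonempty → c ≤ lamMin (activeGram V b x σ k)) (k : Fin r) :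
    ∑ s ∈ activeSet V b x k, μ s ≤ √N / √c := by
  rcases (activeSet V b x k).eq_empty_or_nonempty with hk | hk
  · rw [hk, sum_empty]
    positivity
  · refine sum_le_sqrt_div_sqrt_of_mul_sum_sq_le_one hc (hN k) ?_
    calc c * ∑ s ∈ activeSet V b x k, μ s ^ 2
        ≤ lamMin (activeGram V b x σ k) * ∑ s ∈ activeSet V b x k, μ s ^ 2 := by
          gcongr
          exact hcl k hk
      _ ≤ 1 := h.lamMin_activeGram_mul_sum_sq_le_one hk

end IsStationaryRepr

theorem stmt7_general {r n : ℕ} {ι : Type*} [Fintype ι] [DecidableEq ι]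
    (wb : Fin r → ℝ) (Vb : Matrix (Fin r) (Fin n) ℝ) (bb : Fin r → ℝ)
    (x : ι → Fin n → ℝ) (σ : ι → ℝ)
    (μ : ι → ℝ) (hμ : ∀ s, 0 ≤ μ s)
    -- (a)
    (ha : ∀ k, wb k =
      ∑ s, σ s * μ s * (if 0 < Vb k ⬝ᵥ x s + bb k then Vb k ⬝ᵥ x s + bb k else 0))
    -- (b)
    (hbV : ∀ k a, Vb k a =
      ∑ s, σ s * μ s * (if 0 < Vb k ⬝ᵥ x s + bb k then wb k else 0) * x s a)
    -- (c)
    (hcb : ∀ k, bb k = ∑ s, σ s * μ s * (if 0 < Vb k ⬝ᵥ x s + bb k then wb k else 0))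
    -- (d): every point is a support vector attaining margin exactly 1
    (hd : ∀ s, σ s * (∑ k, wb k * max (Vb k ⬝ᵥ x s + bb k) 0) = 1)
    -- support vectors activating node k
    (Sk : Fin r → Finset ι)
    (hSk : ∀ k, Sk k = Finset.univ.filter (fun s => 0 < Vb k ⬝ᵥ x s + bb k))
    -- `n_sup`, `λ̲`, `n_node`
    (nsup : ℕ) (hnsup : nsup = Finset.univ.sup (fun k => (Sk k).card))
    (lam : ℝ)
    (hlam : lam = sInf ((fun k : Fin r => lamMin
        (Matrix.of (fun s t : {i // i ∈ Sk k} =>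
          ∑ a, (σ s.1 * x s.1 a) * (σ t.1 * x t.1 a)))) '' {k | (Sk k).Nonempty}))
    (hlampos : 0 < lam)
    (nnode : ℕ)
    (hnnode : nnode = sInf {c : ℕ | ∃ Kset : Finset (Fin r),
        Kset.card = c ∧ ∀ s : ι, ∃ k ∈ Kset, s ∈ Sk k}) :
    ∀ z y : Fin n → ℝ,
      |(∑ k, wb k * max (Vb k ⬝ᵥ z + bb k) 0) - ∑ k, wb k * max (Vb k ⬝ᵥ y + bb k) 0| ≤
        ((nnode : ℝ) * Real.sqrt nsup / Real.sqrt lam) * en (z - y) := by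
  intro z y
  obtain rfl : Sk = activeSet Vb bb x := funext hSk
  have h : IsStationaryRepr wb Vb bb x σ μ := ⟨ha, hbV, hcb⟩
  have hcard (k : Fin r) : #(activeSet Vb bb x k) ≤ nsup := by
    rw [hnsup]
    exact le_sup (f := fun k => #(activeSet Vb bb x k)) (mem_univ k)
  have hlam_le (k : Fin r) (hk : (activeSet Vb bb x k).Nonempty) :
      lam ≤ lamMin (activeGram Vb bb x σ k) := by
    rw [hlam]
    exact csInf_le (Set.toFinite _).bddBelow ⟨k, hk, rfl⟩
  obtain ⟨K, hK, hKcover⟩ := exists_card_eq_sInf_of_forall_exists_mem fun s =>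
    (exists_pos_of_twoLayerNet_ne_zero (right_ne_zero_of_mul_eq_one (hd s))).imp
      fun _ => mem_activeSet.2
  calc |twoLayerNet wb Vb bb z - twoLayerNet wb Vb bb y|
      ≤ (∑ k, |wb k| * en (Vb k)) * en (z - y) := abs_twoLayerNet_sub_le wb Vb bb z y
    _ ≤ (∑ k, wb k ^ 2) * en (z - y) := by
        refine mul_le_mul_of_nonneg_right (sum_le_sum fun k _ => ?_) (en_nonneg _)
        rw [sq, ← abs_mul_abs_self]
        exact mul_le_mul_of_nonneg_left (h.en_row_le_abs_weight k) (abs_nonneg _)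
    _ = (∑ s, μ s) * en (z - y) := by rw [h.sum_sq_weight_eq_sum hd]
    _ ≤ (nnode * √nsup / √lam) * en (z - y) := by
        refine mul_le_mul_of_nonneg_right ?_ (en_nonneg _)
        rw [mul_div_assoc, hnnode, ← hK]
        exact sum_le_card_mul_of_forall_exists_mem hμ hKcover fun k _ =>
          h.sum_activeSet_le hlampos hcard hlam_le k

/-- deterministic content of Theorem 3.  Under the stationarity
representation (a)–(c) with nonnegative multipliers `μ_s`, labels `σ_s ∈ {±1}`, frozen
activation patterns, and the support-vector condition (d), the two-layer ReLU classifier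
`x ↦ w̄ᵀ (V̄ x + b̄)₊` is Lipschitz with constant at most `n_node √n_sup / √λ̲`. -/
theorem stmt7 {r n : ℕ} {ι : Type*} [Fintype ι] [DecidableEq ι]
    (wb : Fin r → ℝ) (Vb : Matrix (Fin r) (Fin n) ℝ) (bb : Fin r → ℝ)
    (x : ι → Fin n → ℝ) (σ : ι → ℝ) (hσ : ∀ s, σ s = 1 ∨ σ s = -1)
    (μ : ι → ℝ) (hμ : ∀ s, 0 ≤ μ s)
    -- (a)
    (ha : ∀ k, wb k =
      ∑ s, σ s * μ s * (if 0 < Vb k ⬝ᵥ x s + bb k then Vb k ⬝ᵥ x s + bb k else 0))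
    -- (b)
    (hbV : ∀ k a, Vb k a =
      ∑ s, σ s * μ s * (if 0 < Vb k ⬝ᵥ x s + bb k then wb k else 0) * x s a)
    -- (c)
    (hcb : ∀ k, bb k = ∑ s, σ s * μ s * (if 0 < Vb k ⬝ᵥ x s + bb k then wb k else 0))
    -- (d): every point is a support vector attaining margin exactly 1
    (hd : ∀ s, σ s * (∑ k, wb k * max (Vb k ⬝ᵥ x s + bb k) 0) = 1)
    -- support vectors activating node k
    (Sk : Fin r → Finset ι)
    (hSk : ∀ k, Sk k = Finset.univ.filter (fun s => 0 < Vb k ⬝ᵥ x s + bb k))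
    -- `n_sup`, `λ̲`, `n_node`
    (nsup : ℕ) (hnsup : nsup = Finset.univ.sup (fun k => (Sk k).card))
    (lam : ℝ)
    (hlam : lam = sInf ((fun k : Fin r => lamMin
        (Matrix.of (fun s t : {i // i ∈ Sk k} =>
          ∑ a, (σ s.1 * x s.1 a) * (σ t.1 * x t.1 a)))) '' {k | (Sk k).Nonempty}))
    (hlampos : 0 < lam)
    (nnode : ℕ)
    (hnnode : nnode = sInf {c : ℕ | ∃ Kset : Finset (Fin r),
        Kset.card = c ∧ ∀ s : ι, ∃ k ∈ Kset, s ∈ Sk k}) :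
    ∀ z y : Fin n → ℝ,
      |(∑ k, wb k * max (Vb k ⬝ᵥ z + bb k) 0) - ∑ k, wb k * max (Vb k ⬝ᵥ y + bb k) 0| ≤
        ((nnode : ℝ) * Real.sqrt nsup / Real.sqrt lam) * en (z - y) :=
  stmt7_general wb Vb bb x σ μ hμ ha hbV hcb hd Sk hSk nsup hnsup lam hlam hlampos nnode hnnode
end

section
/- Let {x_i}_{i∈I} and {x_j}_{j∈J} be finite sets in ℝ^{n_0} separable by a hyperplane through the origin, and define the deep linear cross-entropy loss ℓ(W_1, …, W_L) = Σ_{i∈I} log(1 + exp(W_L ⋯ W_1 x_i)) + Σ_{j∈J} log(1 + exp(−W_L ⋯ W_1 x_j)), where W_k ∈ ℝ^{n_k × n_{k−1}} and n_L = 1. Suppose (W_1(t), …, W_L(t)) solves the gradient flow dW_k/dt = −∂ℓ/∂W_k for all k ∈ [L] and converges in direction to (W̄_1, …, W̄_L): there exists h : [0, ∞) → (0, ∞) with h(t) → ∞ such that ‖W_k(t) − h(t) W̄_k‖_F / h(t) → 0 for every k, where each W̄_k has bounded entries and W̄_k ≠ 0 for at least one k. Then rank(W̄_k) ≤ 1 for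 every k ∈ [L]. -/
/-! The gradient of the loss with respect to `W_k` is an outer product `u_{k+1} r_kᵀ`, where the
backpropagated vectors satisfy `u_k = W_kᵀ u_{k+1}` and the weighted activations satisfy
`r_{k+1} = W_k r_k`. Hence `W_{k+1}ᵀ W_{k+1} − W_k W_kᵀ` is conserved by the gradient flow, while
`W_k(t) ≈ h(t) W̄_k` with `h(t) → ∞`; dividing by `h(t)²` gives `W̄_{k+1}ᵀ W̄_{k+1} = W̄_k W̄_kᵀ`.
So `rank W̄_k = rank (W̄_k W̄_kᵀ) ≤ rank W̄_{k+1}`, and the last layer has a single row. -/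

open Filter Topology

/-- Forward pass of a deep linear network: `fwd n W x k = W_{k} ⋯ W_1 x` (activations at
layer `k`). -/
def fwd (n : ℕ → ℕ) (W : ∀ k : ℕ, Matrix (Fin (n (k + 1))) (Fin (n k)) ℝ)
    (x : Fin (n 0) → ℝ) : ∀ k : ℕ, Fin (n k) → ℝ
  | 0 => x
  | k + 1 => (W k).mulVec (fwd n W x k)

open Matrix

/-- `bwd n W L k = 𝟙ᵀ W (L - 1) ⋯ W k`: the gradient of the output `∑ o, fwd n W x L o` with respect
to the activations at layer `k`. -/
noncomputable def bwd (n : ℕ → ℕ) (W : ∀ k : ℕ, Matrix (Fin (n (k + 1))) (Fin (n k)) ℝ)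
    (L k : ℕ) : Fin (n k) → ℝ :=
  if k < L then bwd n W L (k + 1) ᵥ* W k else 1
termination_by L - k

section Backpropagation

variable {n : ℕ → ℕ} {W : ∀ k : ℕ, Matrix (Fin (n (k + 1))) (Fin (n k)) ℝ} {L : ℕ}

theorem bwd_of_lt {k : ℕ} (hk : k < L) : bwd n W L k = bwd n W L (k + 1) ᵥ* W k := by
  rw [bwd, if_pos hk]

theorem bwd_of_le {k : ℕ} (hk : L ≤ k) : bwd n W L k = 1 := by
  rw [bwd, if_neg hk.not_gt]

theorem bwd_update_of_lt {j k : ℕ} (A : Matrix (Fin (n (j + 1))) (Fin (n j)) ℝ) (hjk : j < k) :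
    bwd n (Function.update W j A) L k = bwd n W L k := by
  rcases lt_or_ge k L with hk | hk
  · rw [bwd_of_lt hk, bwd_of_lt hk, bwd_update_of_lt A (hjk.trans k.lt_succ_self),
      Function.update_of_ne hjk.ne']
  · rw [bwd_of_le hk, bwd_of_le hk]
termination_by L - k

theorem fwd_update_of_le {k m : ℕ} (A : Matrix (Fin (n (k + 1))) (Fin (n k)) ℝ)
    (x : Fin (n 0) → ℝ) (hm : m ≤ k) : fwd n (Function.update W k A) x m = fwd n W x m := by
  induction m with
  | zero => rfl
  | succ m ih =>
    change (Function.update W k A m) *ᵥ _ = W m *ᵥ _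
    rw [Function.update_of_ne (by omega), ih (by omega)]

theorem bwd_dotProduct_fwd (x : Fin (n 0) → ℝ) {m : ℕ} (hm : m ≤ L) :
    bwd n W L m ⬝ᵥ fwd n W x m = ∑ o, fwd n W x L o := by
  rcases hm.lt_or_eq with hm | rfl
  · rw [bwd_of_lt hm, ← dotProduct_mulVec]
    exact bwd_dotProduct_fwd x hm
  · rw [bwd_of_le le_rfl, one_dotProduct]
termination_by L - m

theorem sum_fwd_update_single {k : ℕ} (hk : k < L) (x : Fin (n 0) → ℝ)
    (a : Fin (n (k + 1))) (b : Fin (n k)) (ε : ℝ) :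
    ∑ o, fwd n (Function.update W k (W k + ε • single a b 1)) x L o =
      ∑ o, fwd n W x L o + ε * (bwd n W L (k + 1) a * fwd n W x k b) := by
  rw [← bwd_dotProduct_fwd x hk, ← bwd_dotProduct_fwd x hk]
  change _ ⬝ᵥ (Function.update W k _ k *ᵥ fwd n _ x k) = _ ⬝ᵥ (W k *ᵥ fwd n W x k) + _
  rw [bwd_update_of_lt _ k.lt_succ_self, fwd_update_of_le _ x le_rfl, Function.update_self,
    add_mulVec, dotProduct_add, smul_mulVec, dotProduct_smul, single_mulVec]
  erw [dotProduct_single]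
  rw [one_mul, smul_eq_mul]

end Backpropagation

theorem HasDerivAt.log_one_add_exp {f : ℝ → ℝ} {f' x : ℝ} (hf : HasDerivAt f f' x) :
    HasDerivAt (fun y => Real.log (1 + Real.exp (f y))) (Real.sigmoid (f x) * f') x := by
  convert (hf.exp.const_add 1).log (by positivity) using 1
  rw [Real.sigmoid_def, Real.exp_neg]
  field_simp
  ring

noncomputable def weightedActivation {ι κ : Type*} [Fintype ι] [Fintype κ] (n : ℕ → ℕ)
    (xI : ι → Fin (n 0) → ℝ) (xJ : κ → Fin (n 0) → ℝ)
    (W : ∀ k : ℕ, Matrix (Fin (n (k + 1))) (Fin (n k)) ℝ) (L k : ℕ) : Fin (n k) → ℝ :=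
  ∑ i, Real.sigmoid (∑ o, fwd n W (xI i) L o) • fwd n W (xI i) k -
    ∑ j, Real.sigmoid (-∑ o, fwd n W (xJ j) L o) • fwd n W (xJ j) k

section LossGradient

variable {ι κ : Type*} [Fintype ι] [Fintype κ] {n : ℕ → ℕ}
  {xI : ι → Fin (n 0) → ℝ} {xJ : κ → Fin (n 0) → ℝ}
  {W : ∀ k : ℕ, Matrix (Fin (n (k + 1))) (Fin (n k)) ℝ} {L : ℕ}

theorem weightedActivation_succ (k : ℕ) :
    weightedActivation n xI xJ W L (k + 1) = W k *ᵥ weightedActivation n xI xJ W L k := by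
  simp only [weightedActivation, mulVec_sub, mulVec_sum, mulVec_smul]
  rfl

theorem deriv_loss_update_single
    {loss : (∀ k : ℕ, Matrix (Fin (n (k + 1))) (Fin (n k)) ℝ) → ℝ}
    (hloss : ∀ Wt, loss Wt =
      (∑ i, Real.log (1 + Real.exp (∑ a, fwd n Wt (xI i) L a))) +
        ∑ j, Real.log (1 + Real.exp (-(∑ a, fwd n Wt (xJ j) L a))))
    {k : ℕ} (hk : k < L) (a : Fin (n (k + 1))) (b : Fin (n k)) :
    deriv (fun ε : ℝ => loss (Function.update W k (W k + ε • single a b 1))) 0 =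
      bwd n W L (k + 1) a * weightedActivation n xI xJ W L k b := by
  simp_rw [hloss, sum_fwd_update_single hk]
  have hline (p q : ℝ) : HasDerivAt (fun ε : ℝ => p + ε * q) q 0 := by
    simpa using ((hasDerivAt_id (0 : ℝ)).mul_const q).const_add p
  have hI := HasDerivAt.fun_sum (u := Finset.univ) fun i _ =>
    (hline (∑ o, fwd n W (xI i) L o) (bwd n W L (k + 1) a * fwd n W (xI i) k b)).log_one_add_exp
  have hJ := HasDerivAt.fun_sum (u := Finset.univ) fun j _ =>
    (hline (∑ o, fwd n W (xJ j) L o)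
      (bwd n W L (k + 1) a * fwd n W (xJ j) k b)).fun_neg.log_one_add_exp
  refine (hI.add hJ).deriv.trans ?_
  simp only [weightedActivation, Pi.sub_apply, Finset.sum_apply, Pi.smul_apply, smul_eq_mul,
    zero_mul, add_zero, mul_sub, Finset.mul_sum, mul_neg, Finset.sum_neg_distrib, ← sub_eq_add_neg]
  congr 1 <;> exact Finset.sum_congr rfl fun _ _ => by ring

end LossGradient

section Balancedness

variable {m p q : Type*} [Fintype p] [Fintype q]
  {V : ℝ → Matrix p m ℝ} {U : ℝ → Matrix m q ℝ}

theorem hasDerivAt_transpose_mul_self_sub_mul_transpose {g : p → ℝ} {s : q → ℝ} {t : ℝ}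
    (hV : ∀ a b, HasDerivAt (fun τ => V τ a b) (-(g a * (U t *ᵥ s) b)) t)
    (hU : ∀ b c, HasDerivAt (fun τ => U τ b c) (-((g ᵥ* V t) b * s c)) t) (b c : m) :
    HasDerivAt (fun τ => ((V τ)ᵀ * V τ - U τ * (U τ)ᵀ) b c) 0 t := by
  have hVV := HasDerivAt.fun_sum (u := Finset.univ) fun a _ => (hV a b).mul (hV a c)
  have hUU := HasDerivAt.fun_sum (u := Finset.univ) fun a _ => (hU b a).mul (hU c a)
  have hVV' : ∑ a, (-(g a * (U t *ᵥ s) b) * V t a c + V t a b * -(g a * (U t *ᵥ s) c)) =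
      -((U t *ᵥ s) b * (g ᵥ* V t) c + (g ᵥ* V t) b * (U t *ᵥ s) c) := by
    simp only [vecMul, dotProduct, Finset.mul_sum, Finset.sum_mul, ← Finset.sum_add_distrib,
      ← Finset.sum_neg_distrib]
    exact Finset.sum_congr rfl fun _ _ => by ring
  have hUU' : ∑ a, (-((g ᵥ* V t) b * s a) * U t c a + U t b a * -((g ᵥ* V t) c * s a)) =
      -((g ᵥ* V t) b * (U t *ᵥ s) c + (U t *ᵥ s) b * (g ᵥ* V t) c) := by
    simp only [mulVec, dotProduct, Finset.mul_sum, Finset.sum_mul, ← Finset.sum_add_distrib,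
      ← Finset.sum_neg_distrib]
    exact Finset.sum_congr rfl fun _ _ => by ring
  have hsub := hVV.sub hUU
  rw [hVV', hUU', add_comm ((g ᵥ* V t) b * _), sub_self] at hsub
  exact hsub.congr_of_eventuallyEq (.of_forall fun τ => by simp [mul_apply])

theorem transpose_mul_self_sub_mul_transpose_eq {g : ℝ → p → ℝ} {s : ℝ → q → ℝ}
    (hV : ∀ t ≥ 0, ∀ a b, HasDerivAt (fun τ => V τ a b) (-(g t a * (U t *ᵥ s t) b)) t)
    (hU : ∀ t ≥ 0, ∀ b c, HasDerivAt (fun τ => U τ b c) (-((g t ᵥ* V t) b * s t c)) t)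
    {t : ℝ} (ht : 0 ≤ t) :
    (V t)ᵀ * V t - U t * (U t)ᵀ = (V 0)ᵀ * V 0 - U 0 * (U 0)ᵀ := by
  ext b c
  have hd (τ : ℝ) (hτ : 0 ≤ τ) := hasDerivAt_transpose_mul_self_sub_mul_transpose
    (hV τ hτ) (hU τ hτ) b c
  exact constant_of_has_deriv_right_zero (fun τ hτ => (hd τ hτ.1).continuousAt.continuousWithinAt)
    (fun τ hτ => (hd τ hτ.1).hasDerivWithinAt) t ⟨ht, le_rfl⟩

end Balancedness

theorem transpose_mul_self_eq_of_tendsto {m p q α : Type*} [Fintype p] [Fintype q]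
    {l : Filter α} [l.NeBot] {V : α → Matrix p m ℝ} {U : α → Matrix m q ℝ}
    {h : α → ℝ} {Vb : Matrix p m ℝ} {Ub : Matrix m q ℝ}
    {C : Matrix m m ℝ} (hh : Tendsto h l atTop)
    (hV : Tendsto (fun t => (h t)⁻¹ • V t) l (𝓝 Vb))
    (hU : Tendsto (fun t => (h t)⁻¹ • U t) l (𝓝 Ub))
    (hC : ∀ᶠ t in l, (V t)ᵀ * V t - U t * (U t)ᵀ = C) :
    Vbᵀ * Vb = Ub * Ubᵀ := by
  have hcont : Continuous fun P : Matrix p m ℝ × Matrix m q ℝ => P.1ᵀ * P.1 - P.2 * P.2ᵀ := by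
    fun_prop
  have hlim := (hcont.tendsto (Vb, Ub)).comp (hV.prodMk_nhds hU)
  have hzero : Tendsto (fun t => (h t ^ 2)⁻¹ • C) l (𝓝 0) := by
    simpa using (tendsto_inv_atTop_zero.comp ((tendsto_pow_atTop two_ne_zero).comp hh)).smul_const C
  rw [← sub_eq_zero]
  refine tendsto_nhds_unique (hlim.congr' ?_) hzero
  filter_upwards [hC] with t ht
  rw [Function.comp_apply, transpose_smul, transpose_smul, Matrix.smul_mul, Matrix.mul_smul,
    Matrix.smul_mul, Matrix.mul_smul, smul_smul, smul_smul, ← smul_sub, ht, ← mul_inv, ← sq]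


theorem tendsto_inv_smul_of_frobenius {m p α : Type*} [Fintype m] [Fintype p] {l : Filter α}
    {A : α → Matrix m p ℝ} {h : α → ℝ} {B : Matrix m p ℝ} (hpos : ∀ t, 0 < h t)
    (hA : Tendsto (fun t => √(∑ a, ∑ b, (A t a b - h t * B a b) ^ 2) / h t) l (𝓝 0)) :
    Tendsto (fun t => (h t)⁻¹ • A t) l (𝓝 B) := by
  refine tendsto_pi_nhds.2 fun a => tendsto_pi_nhds.2 fun b => ?_
  refine tendsto_iff_norm_sub_tendsto_zero.2
    (squeeze_zero (fun _ => norm_nonneg _) (fun t => ?_) hA)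
  have hentry : (A t a b - h t * B a b) ^ 2 ≤ ∑ a, ∑ b, (A t a b - h t * B a b) ^ 2 :=
    (Finset.single_le_sum (f := fun b => (A t a b - h t * B a b) ^ 2)
      (fun _ _ => sq_nonneg _) (Finset.mem_univ b)).trans
    (Finset.single_le_sum (f := fun a => ∑ b, (A t a b - h t * B a b) ^ 2)
      (fun _ _ => Finset.sum_nonneg fun _ _ => sq_nonneg _) (Finset.mem_univ a))
  have hdiff : ((h t)⁻¹ • A t) a b - B a b = (A t a b - h t * B a b) / h t := by
    rw [Matrix.smul_apply, smul_eq_mul, sub_div, mul_div_cancel_left₀ _ (hpos t).ne',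
      inv_mul_eq_div]
  rw [hdiff, Real.norm_eq_abs, abs_div, abs_of_pos (hpos t)]
  exact div_le_div_of_nonneg_right (Real.abs_le_sqrt hentry) (hpos t).le

theorem Matrix.rank_le_of_transpose_mul_self_eq {m p q : Type*} [Fintype m] [Fintype p]
    [Fintype q] {A : Matrix m q ℝ} {B : Matrix p m ℝ} (h : Bᵀ * B = A * Aᵀ) : A.rank ≤ B.rank := by
  rw [← rank_self_mul_transpose A, ← h]
  exact rank_mul_le_right _ _

theorem rank_le_one_of_transpose_mul_self_eq {n : ℕ → ℕ} {L : ℕ} (hnL : n L = 1)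
    {Wb : ∀ k : ℕ, Matrix (Fin (n (k + 1))) (Fin (n k)) ℝ}
    (hbal : ∀ k, k + 1 < L → (Wb (k + 1))ᵀ * Wb (k + 1) = Wb k * (Wb k)ᵀ) {k : ℕ} (hk : k < L) :
    (Wb k).rank ≤ 1 := by
  rcases (show k + 1 ≤ L from hk).lt_or_eq with hk' | hk'
  · exact (rank_le_of_transpose_mul_self_eq (hbal k hk')).trans
      (rank_le_one_of_transpose_mul_self_eq hnL hbal hk')
  · calc (Wb k).rank ≤ Fintype.card (Fin (n (k + 1))) := rank_le_card_height _
      _ = 1 := by rw [Fintype.card_fin, hk', hnL]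
termination_by L - k

theorem stmt11_general {ι κ : Type*} [Fintype ι] [Fintype κ] (L : ℕ)
    (n : ℕ → ℕ) (hnL : n L = 1)
    (xI : ι → Fin (n 0) → ℝ) (xJ : κ → Fin (n 0) → ℝ)
    (loss : (∀ k : ℕ, Matrix (Fin (n (k + 1))) (Fin (n k)) ℝ) → ℝ)
    (hloss : ∀ Wt, loss Wt =
      (∑ i, Real.log (1 + Real.exp (∑ a, fwd n Wt (xI i) L a))) +
        ∑ j, Real.log (1 + Real.exp (-(∑ a, fwd n Wt (xJ j) L a))))
    (W : ℝ → ∀ k : ℕ, Matrix (Fin (n (k + 1))) (Fin (n k)) ℝ)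
    -- gradient flow `dW_k/dt = −∂ℓ/∂W_k`
    (hflow : ∀ t ≥ (0 : ℝ), ∀ k < L, ∀ (a : Fin (n (k + 1))) (b : Fin (n k)),
      HasDerivAt (fun τ => W τ k a b)
        (-(deriv (fun ε : ℝ =>
            loss (Function.update (W t) k (W t k + ε • Matrix.single a b 1))) 0)) t)
    -- convergence in direction
    (h : ℝ → ℝ) (hhpos : ∀ t, 0 < h t) (hhtop : Tendsto h atTop atTop)
    (Wb : ∀ k : ℕ, Matrix (Fin (n (k + 1))) (Fin (n k)) ℝ)
    (hdir : ∀ k < L, Tendsto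
      (fun t => Real.sqrt (∑ a, ∑ b, (W t k a b - h t * Wb k a b) ^ 2) / h t)
      atTop (𝓝 (0 : ℝ))) :
    ∀ k < L, (Wb k).rank ≤ 1 := by
  have hgrad : ∀ t ≥ (0 : ℝ), ∀ k < L, ∀ a b, HasDerivAt (fun τ => W τ k a b)
      (-(bwd n (W t) L (k + 1) a * weightedActivation n xI xJ (W t) L k b)) t :=
    fun t ht k hk a b => by simpa only [deriv_loss_update_single hloss hk] using hflow t ht k hk a b
  have hbal (k : ℕ) (hk : k + 1 < L) : (Wb (k + 1))ᵀ * Wb (k + 1) = Wb k * (Wb k)ᵀ := by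
    refine transpose_mul_self_eq_of_tendsto hhtop
      (tendsto_inv_smul_of_frobenius hhpos (hdir (k + 1) hk))
      (tendsto_inv_smul_of_frobenius hhpos (hdir k (by omega)))
      (C := (W 0 (k + 1))ᵀ * W 0 (k + 1) - W 0 k * (W 0 k)ᵀ) ?_
    filter_upwards [eventually_ge_atTop 0] with t ht
    refine transpose_mul_self_sub_mul_transpose_eq (V := fun t => W t (k + 1)) (U := fun t => W t k)
      (g := fun t => bwd n (W t) L (k + 2))
      (s := fun t => weightedActivation n xI xJ (W t) L k) (fun τ hτ a b => ?_)
      (fun τ hτ b c => ?_) ht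
    · simpa only [weightedActivation_succ] using hgrad τ hτ (k + 1) hk a b
    · simpa only [bwd_of_lt hk] using hgrad τ hτ k (by omega) b c
  exact fun k hk => rank_le_one_of_transpose_mul_self_eq hnL hbal hk

/-- deterministic content of Theorem 5.  If the gradient flow of the
deep linear cross-entropy loss on data separable by a hyperplane through the origin
converges in direction to `(W̄₁, …, W̄_L)` (normalization `h(t) → ∞`,
`‖W_k(t) − h(t) W̄_k‖_F / h(t) → 0`, some `W̄_k ≠ 0`), then every `W̄_k` has rank at
most 1. -/
theorem stmt11 {ι κ : Type*} [Fintype ι] [Fintype κ] (L : ℕ) (hL : 1 ≤ L)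
    (n : ℕ → ℕ) (hnL : n L = 1)
    (xI : ι → Fin (n 0) → ℝ) (xJ : κ → Fin (n 0) → ℝ)
    -- separable by a hyperplane through the origin
    (hsep : ∃ v : Fin (n 0) → ℝ,
      (∀ i, (∑ a, v a * xI i a) < 0) ∧ (∀ j, 0 < ∑ a, v a * xJ j a))
    (loss : (∀ k : ℕ, Matrix (Fin (n (k + 1))) (Fin (n k)) ℝ) → ℝ)
    (hloss : ∀ Wt, loss Wt =
      (∑ i, Real.log (1 + Real.exp (∑ a, fwd n Wt (xI i) L a))) +
        ∑ j, Real.log (1 + Real.exp (-(∑ a, fwd n Wt (xJ j) L a))))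
    (W : ℝ → ∀ k : ℕ, Matrix (Fin (n (k + 1))) (Fin (n k)) ℝ)
    -- gradient flow `dW_k/dt = −∂ℓ/∂W_k`
    (hflow : ∀ t ≥ (0 : ℝ), ∀ k < L, ∀ (a : Fin (n (k + 1))) (b : Fin (n k)),
      HasDerivAt (fun τ => W τ k a b)
        (-(deriv (fun ε : ℝ =>
            loss (Function.update (W t) k (W t k + ε • Matrix.single a b 1))) 0)) t)
    -- convergence in direction
    (h : ℝ → ℝ) (hhpos : ∀ t, 0 < h t) (hhtop : Tendsto h atTop atTop)
    (Wb : ∀ k : ℕ, Matrix (Fin (n (k + 1))) (Fin (n k)) ℝ)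
    (hWbne : ∃ k < L, Wb k ≠ 0)
    (hdir : ∀ k < L, Tendsto
      (fun t => Real.sqrt (∑ a, ∑ b, (W t k a b - h t * Wb k a b) ^ 2) / h t)
      atTop (𝓝 (0 : ℝ))) :
    ∀ k < L, (Wb k).rank ≤ 1 :=
  stmt11_general L n hnL xI xJ loss hloss W hflow h hhpos hhtop Wb hdir
end

section
/- Let {x_i}_{i∈I} and {x_j}_{j∈J} be finite sets in ℝ^{n_0} and define ℓ(W_1, …, W_L) = Σ_{i∈I} log(1 + exp(W_L ⋯ W_1 x_i)) + Σ_{j∈J} log(1 + exp(−W_L ⋯ W_1 x_j)), where W_k ∈ ℝ^{n_k × n_{k−1}} and n_L = 1. If (W_1(t), …, W_L(t)) is a solution of the gradient flow dW_k/dt = −∂ℓ/∂W_k for all k ∈ [L], then for all k, k' ∈ [L] and all t ≥ 0, ‖W_k(t)‖_F² − ‖W_{k'}(t)‖_F² = ‖W_k(0)‖_F² − ‖W_{k'}(0)‖_F². -/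
section MatrixCalculus

-- Any norm on matrices would do: it only serves to speak of differentiability.
attribute [local instance] Matrix.normedAddCommGroup Matrix.normedSpace

variable {m p : Type*} [Fintype m] [Fintype p] [DecidableEq m] [DecidableEq p]

theorem Matrix.sum_smul_lineDeriv_single {𝕜 F : Type*} [NontriviallyNormedField 𝕜]
    [NormedAddCommGroup F] [NormedSpace 𝕜 F] {φ : Matrix m p 𝕜 → F} {M : Matrix m p 𝕜}
    (hφ : DifferentiableAt 𝕜 φ M) :
    ∑ a, ∑ b, M a b • lineDeriv 𝕜 φ M (Matrix.single a b 1) = lineDeriv 𝕜 φ M M := by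
  simp only [hφ.lineDeriv_eq_fderiv, ← map_smul, ← map_sum, Matrix.smul_single, smul_eq_mul,
    mul_one, ← Matrix.matrix_eq_sum_single]

theorem Matrix.hasDerivAt_sum_sq_of_gradientFlow {X : ℝ → Matrix m p ℝ}
    {φ : Matrix m p ℝ → ℝ} {τ : ℝ} (hφ : DifferentiableAt ℝ φ (X τ))
    (hX : ∀ a b, HasDerivAt (fun σ => X σ a b)
      (-lineDeriv ℝ φ (X τ) (Matrix.single a b 1)) τ) :
    HasDerivAt (fun σ => ∑ a, ∑ b, X σ a b ^ 2) (-2 * lineDeriv ℝ φ (X τ) (X τ)) τ := by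
  refine (HasDerivAt.fun_sum fun a _ => HasDerivAt.fun_sum fun b _ =>
    (hX a b).fun_pow 2).congr_deriv ?_
  rw [← Matrix.sum_smul_lineDeriv_single hφ, Finset.mul_sum]
  refine Finset.sum_congr rfl fun a _ => ?_
  rw [Finset.mul_sum]
  refine Finset.sum_congr rfl fun b _ => ?_
  simp only [smul_eq_mul]
  ring

end MatrixCalculus

namespace fwd

variable {n : ℕ → ℕ} (W : ∀ k : ℕ, Matrix (Fin (n (k + 1))) (Fin (n k)) ℝ)
  (x : Fin (n 0) → ℝ) {k m : ℕ}

theorem update_of_le (hm : m ≤ k) (M : Matrix (Fin (n (k + 1))) (Fin (n k)) ℝ) :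
    fwd n (Function.update W k M) x m = fwd n W x m := by
  induction m with
  | zero => rfl
  | succ m ih => rw [fwd, fwd, ih (by omega), Function.update_of_ne (by omega)]

theorem isLinearMap_update (hkm : k < m) :
    IsLinearMap ℝ fun M : Matrix (Fin (n (k + 1))) (Fin (n k)) ℝ =>
      fwd n (Function.update W k M) x m := by
  induction m, hkm using Nat.le_induction with
  | base =>
    simp only [fwd, update_of_le W x le_rfl, Function.update_self]
    exact ⟨fun M N => Matrix.add_mulVec M N _, fun c M => Matrix.smul_mulVec c M _⟩
  | succ m hkm ih =>
    simp only [fwd, Function.update_of_ne (Nat.ne_of_gt hkm)]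
    exact ⟨fun M N => by rw [ih.map_add, Matrix.mulVec_add],
      fun c M => by rw [ih.map_smul, Matrix.mulVec_smul]⟩

theorem update_smul_self (hkm : k < m) (c : ℝ) :
    fwd n (Function.update W k (c • W k)) x m = c • fwd n W x m := by
  rw [(isLinearMap_update W x hkm).map_smul, Function.update_eq_self]

end fwd

noncomputable def logisticLoss {ι κ : Type*} [Fintype ι] [Fintype κ] (n : ℕ → ℕ) (L : ℕ)
    (xI : ι → Fin (n 0) → ℝ) (xJ : κ → Fin (n 0) → ℝ)
    (W : ∀ k : ℕ, Matrix (Fin (n (k + 1))) (Fin (n k)) ℝ) : ℝ :=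
  (∑ i, Real.log (1 + Real.exp (∑ a, fwd n W (xI i) L a))) +
    ∑ j, Real.log (1 + Real.exp (-(∑ a, fwd n W (xJ j) L a)))

namespace logisticLoss

attribute [local instance] Matrix.normedAddCommGroup Matrix.normedSpace

variable {ι κ : Type*} [Fintype ι] [Fintype κ] {n : ℕ → ℕ} {L : ℕ}
  (xI : ι → Fin (n 0) → ℝ) (xJ : κ → Fin (n 0) → ℝ)
  (W : ∀ k : ℕ, Matrix (Fin (n (k + 1))) (Fin (n k)) ℝ) {k k' : ℕ}

theorem differentiable_update (hk : k < L) :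
    Differentiable ℝ fun M => logisticLoss n L xI xJ (Function.update W k M) := by
  have hfwd (x : Fin (n 0) → ℝ) :
      Differentiable ℝ fun M => fwd n (Function.update W k M) x L :=
    (IsLinearMap.mk' _ (fwd.isLinearMap_update W x hk)).toContinuousLinearMap.differentiable
  unfold logisticLoss
  fun_prop (disch := intro; positivity)

theorem hasDerivAt_sum_sq_of_gradientFlow
    {X : ℝ → ∀ k : ℕ, Matrix (Fin (n (k + 1))) (Fin (n k)) ℝ} {τ : ℝ} (hk : k < L)
    (hX : ∀ a b, HasDerivAt (fun σ => X σ k a b)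
      (-lineDeriv ℝ (fun M => logisticLoss n L xI xJ (Function.update (X τ) k M)) (X τ k)
        (Matrix.single a b 1)) τ) :
    HasDerivAt (fun σ => ∑ a, ∑ b, X σ k a b ^ 2)
      (-2 * lineDeriv ℝ (fun M => logisticLoss n L xI xJ (Function.update (X τ) k M)) (X τ k)
        (X τ k)) τ :=
  Matrix.hasDerivAt_sum_sq_of_gradientFlow (differentiable_update xI xJ (X τ) hk _) hX

theorem update_smul_self_eq (hk : k < L) (hk' : k' < L) (c : ℝ) :
    logisticLoss n L xI xJ (Function.update W k (c • W k)) =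
      logisticLoss n L xI xJ (Function.update W k' (c • W k')) := by
  simp only [logisticLoss, fwd.update_smul_self W _ hk, fwd.update_smul_self W _ hk']

theorem lineDeriv_update_self_eq (hk : k < L) (hk' : k' < L) :
    lineDeriv ℝ (fun M => logisticLoss n L xI xJ (Function.update W k M)) (W k) (W k) =
      lineDeriv ℝ (fun M => logisticLoss n L xI xJ (Function.update W k' M)) (W k') (W k') := by
  refine congrArg (deriv · 0) (funext fun s => ?_)
  simp only [show W k + s • W k = (1 + s) • W k by module,
    show W k' + s • W k' = (1 + s) • W k' by module, update_smul_self_eq xI xJ W hk hk']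

end logisticLoss

theorem stmt12_general {ι κ : Type*} [Fintype ι] [Fintype κ] (L : ℕ)
    (n : ℕ → ℕ)
    (xI : ι → Fin (n 0) → ℝ) (xJ : κ → Fin (n 0) → ℝ)
    (loss : (∀ k : ℕ, Matrix (Fin (n (k + 1))) (Fin (n k)) ℝ) → ℝ)
    (hloss : ∀ Wt, loss Wt =
      (∑ i, Real.log (1 + Real.exp (∑ a, fwd n Wt (xI i) L a))) +
        ∑ j, Real.log (1 + Real.exp (-(∑ a, fwd n Wt (xJ j) L a))))
    (W : ℝ → ∀ k : ℕ, Matrix (Fin (n (k + 1))) (Fin (n k)) ℝ)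
    -- gradient flow `dW_k/dt = −∂ℓ/∂W_k`
    (hflow : ∀ t ≥ (0 : ℝ), ∀ k < L, ∀ (a : Fin (n (k + 1))) (b : Fin (n k)),
      HasDerivAt (fun τ => W τ k a b)
        (-(deriv (fun ε : ℝ =>
            loss (Function.update (W t) k (W t k + ε • Matrix.single a b 1))) 0)) t) :
    ∀ k < L, ∀ k' < L, ∀ t ≥ (0 : ℝ),
      (∑ a, ∑ b, (W t k a b) ^ 2) - (∑ a, ∑ b, (W t k' a b) ^ 2) =
      (∑ a, ∑ b, (W 0 k a b) ^ 2) - (∑ a, ∑ b, (W 0 k' a b) ^ 2) := by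
  intro k hk k' hk' t ht
  obtain rfl : loss = logisticLoss n L xI xJ := funext hloss
  have hconst : ∀ τ ≥ (0 : ℝ), HasDerivAt
      (fun σ => (∑ a, ∑ b, (W σ k a b) ^ 2) - (∑ a, ∑ b, (W σ k' a b) ^ 2)) 0 τ := by
    intro τ hτ
    have h := (logisticLoss.hasDerivAt_sum_sq_of_gradientFlow xI xJ hk (hflow τ hτ k hk)).sub
      (logisticLoss.hasDerivAt_sum_sq_of_gradientFlow xI xJ hk' (hflow τ hτ k' hk'))
    rwa [logisticLoss.lineDeriv_update_self_eq xI xJ (W τ) hk hk', sub_self] at h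
  exact constant_of_has_deriv_right_zero
    (fun τ hτ => (hconst τ hτ.1).continuousAt.continuousWithinAt)
    (fun τ hτ => (hconst τ hτ.1).hasDerivWithinAt) t ⟨ht, le_rfl⟩

/-- balancedness conservation law in the proof of Theorem 5.  Along the
gradient flow of the deep linear cross-entropy loss, the differences
`‖W_k(t)‖_F² − ‖W_{k'}(t)‖_F²` are conserved for all layers `k, k' ∈ [L]`. -/
theorem stmt12 {ι κ : Type*} [Fintype ι] [Fintype κ] (L : ℕ) (hL : 1 ≤ L)
    (n : ℕ → ℕ) (hnL : n L = 1)
    (xI : ι → Fin (n 0) → ℝ) (xJ : κ → Fin (n 0) → ℝ)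
    (loss : (∀ k : ℕ, Matrix (Fin (n (k + 1))) (Fin (n k)) ℝ) → ℝ)
    (hloss : ∀ Wt, loss Wt =
      (∑ i, Real.log (1 + Real.exp (∑ a, fwd n Wt (xI i) L a))) +
        ∑ j, Real.log (1 + Real.exp (-(∑ a, fwd n Wt (xJ j) L a))))
    (W : ℝ → ∀ k : ℕ, Matrix (Fin (n (k + 1))) (Fin (n k)) ℝ)
    -- gradient flow `dW_k/dt = −∂ℓ/∂W_k`
    (hflow : ∀ t ≥ (0 : ℝ), ∀ k < L, ∀ (a : Fin (n (k + 1))) (b : Fin (n k)),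
      HasDerivAt (fun τ => W τ k a b)
        (-(deriv (fun ε : ℝ =>
            loss (Function.update (W t) k (W t k + ε • Matrix.single a b 1))) 0)) t) :
    ∀ k < L, ∀ k' < L, ∀ t ≥ (0 : ℝ),
      (∑ a, ∑ b, (W t k a b) ^ 2) - (∑ a, ∑ b, (W t k' a b) ^ 2) =
      (∑ a, ∑ b, (W 0 k a b) ^ 2) - (∑ a, ∑ b, (W 0 k' a b) ^ 2) :=
  stmt12_general L n xI xJ loss hloss W hflow
end
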